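/- arXiv:1805.02093 — 2 statements merged into one kernel-verified Lean document; each statement's English description precedes it below -/
import Mathlib

section
/- Let (P_n) be strongly invariant for the system (A) and let h, k be growth rates. The pair (A,P) is (h,k)-dichotomic if and only if there exists a nondecreasing sequence s : ℕ → [1,∞) such that h_m‖A_m^n P_n x‖ ≤ s_n h_n‖x‖ and k_m‖B_m^n Q_m x‖ ≤ s_m k_n‖x‖ for all m ≥ n and all x ∈ X. -/
open ContinuousLinearMap Filter

noncomputable section

variable {X : Type*} [NormedAddCommGroup X] [NormedSpace ℝ X]

/-- The evolution operator `A_m^n` associated to the linear difference system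
`x_{n+1} = A_n x_n`: `A_m^n = A_{m-1} ⋯ A_n` for `m > n` and `A_n^n = I`. -/
def evol (A : ℕ → X →L[ℝ] X) : ℕ → ℕ → X →L[ℝ] X
  | 0, _ => 1
  | m + 1, n => if m + 1 ≤ n then 1 else A m ∘L evol A m n

/-- `P` is a projectors sequence. -/
def ProjSeq (P : ℕ → X →L[ℝ] X) : Prop := ∀ n, P n ∘L P n = P n

/-- The projectors sequence `P` is invariant for the system `(A)`. -/
def InvariantFor (A P : ℕ → X →L[ℝ] X) : Prop := ∀ n, A n ∘L P n = P (n + 1) ∘L A n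

/-- The projectors sequence `P` is strongly invariant for the system `(A)`: it is invariant and
the restriction of `A_m^n` to `Ker P_n` is an isomorphism from `Ker P_n` onto `Ker P_m`. -/
def StronglyInvariantFor (A P : ℕ → X →L[ℝ] X) : Prop :=
  InvariantFor A P ∧ ∀ m n : ℕ, n ≤ m →
    Set.BijOn (evol A m n) (LinearMap.ker (P n : X →ₗ[ℝ] X) : Set X) (LinearMap.ker (P m : X →ₗ[ℝ] X))

/-- A growth rate: an increasing sequence with values in `[1, ∞)` tending to `∞`. -/
def IsGrowthRate (h : ℕ → ℝ) : Prop :=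
  StrictMono h ∧ (∀ n, 1 ≤ h n) ∧ Tendsto h atTop atTop

/-- The pair `(A, P)` is `(h,k)`-dichotomic. -/
def Dichotomic (A P : ℕ → X →L[ℝ] X) (h k : ℕ → ℝ) : Prop :=
  ∃ d : ℕ → ℝ, (∀ n, 1 ≤ d n) ∧ Monotone d ∧
    ∀ m n : ℕ, n ≤ m → ∀ x : X,
      h m * ‖evol A m n (P n x)‖ ≤ d n * (h n * ‖P n x‖) ∧
      k m * ‖(1 - P n) x‖ ≤ d m * (k n * ‖evol A m n ((1 - P n) x)‖)

/-- The pair `(A, P)` is uniformly `(h,k)`-dichotomic. -/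
def UniformDichotomic (A P : ℕ → X →L[ℝ] X) (h k : ℕ → ℝ) : Prop :=
  ∃ d : ℝ, 1 ≤ d ∧
    ∀ m n : ℕ, n ≤ m → ∀ x : X,
      h m * ‖evol A m n (P n x)‖ ≤ d * (h n * ‖P n x‖) ∧
      k m * ‖(1 - P n) x‖ ≤ d * (k n * ‖evol A m n ((1 - P n) x)‖)

/-- The pair `(A, P)` has `(h,k)`-growth. -/
def HasGrowth (A P : ℕ → X →L[ℝ] X) (h k : ℕ → ℝ) : Prop :=
  ∃ g : ℕ → ℝ, (∀ n, 1 ≤ g n) ∧ Monotone g ∧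
    ∀ m n : ℕ, n ≤ m → ∀ x : X,
      h n * ‖evol A m n (P n x)‖ ≤ g n * (h m * ‖P n x‖) ∧
      k n * ‖(1 - P n) x‖ ≤ g m * (k m * ‖evol A m n ((1 - P n) x)‖)

/-- `N` is a sequence of norms on `X`. -/
def IsNormSeq (N : ℕ → X → ℝ) : Prop :=
  ∀ n, (∀ x y, N n (x + y) ≤ N n x + N n y) ∧
    (∀ (a : ℝ) (x : X), N n (a • x) = |a| * N n x) ∧
    (∀ x, N n x = 0 ↔ x = 0)

/-- The sequence of norms `N` is compatible with the projectors sequence `P`. -/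
def NormsCompatible (N : ℕ → X → ℝ) (P : ℕ → X →L[ℝ] X) : Prop :=
  IsNormSeq N ∧ ∃ c : ℕ → ℝ, (∀ n, 1 ≤ c n) ∧ Monotone c ∧
    ∀ (n : ℕ) (x : X), ‖x‖ ≤ N n x ∧ N n x ≤ c n * (‖P n x‖ + ‖(1 - P n) x‖)

/-- The defining properties of the skew-evolution operator `B` associated to the pair `(A, P)`:
`A_m^n B_m^n Q_m = Q_m`, `B_m^n A_m^n Q_n = Q_n` and `B_m^n Q_m = Q_n B_m^n Q_m` for `m ≥ n`,
where `Q_n = I - P_n`. -/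
def SkewEvol (A P : ℕ → X →L[ℝ] X) (B : ℕ → ℕ → X →L[ℝ] X) : Prop :=
  ∀ m n : ℕ, n ≤ m →
    evol A m n ∘L (B m n ∘L (1 - P m)) = 1 - P m ∧
    B m n ∘L (evol A m n ∘L (1 - P n)) = 1 - P n ∧
    B m n ∘L (1 - P m) = (1 - P n) ∘L (B m n ∘L (1 - P m))

/-! The forward implication bounds `‖P_n x‖` and `‖Q_m x‖` by `(1 + ‖P_n‖) ‖x‖`, `(1 + ‖P_m‖) ‖x‖` and absorbs
the running maximum of these constants into `d`; the second estimate follows by applying the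
dichotomy to `y = B_m^n Q_m x ∈ Ker P_n`, for which `A_m^n y = Q_m x`. Conversely, the `s`-bounds
evaluated at `P_n x` and at `A_m^n Q_n x ∈ Ker P_m` (invariance), where `B_m^n` undoes `A_m^n`,
are the two dichotomy estimates with `d = s`. -/

def SkewDichotomic (A P : ℕ → X →L[ℝ] X) (B : ℕ → ℕ → X →L[ℝ] X) (h k : ℕ → ℝ) : Prop :=
  ∃ s : ℕ → ℝ, (∀ n, 1 ≤ s n) ∧ Monotone s ∧
    ∀ m n : ℕ, n ≤ m → ∀ x : X,
      h m * ‖evol A m n (P n x)‖ ≤ s n * (h n * ‖x‖) ∧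
      k m * ‖B m n ((1 - P m) x)‖ ≤ s m * (k n * ‖x‖)

lemma IsGrowthRate.nonneg {h : ℕ → ℝ} (hh : IsGrowthRate h) (n : ℕ) : 0 ≤ h n :=
  zero_le_one.trans (hh.2.1 n)

lemma norm_apply_le_one_add_norm_mul (p : X →L[ℝ] X) (x : X) : ‖p x‖ ≤ (1 + ‖p‖) * ‖x‖ := by
  nlinarith [p.le_opNorm x, norm_nonneg x]

lemma norm_one_sub_apply_le_one_add_norm_mul (p : X →L[ℝ] X) (x : X) :
    ‖(1 - p) x‖ ≤ (1 + ‖p‖) * ‖x‖ :=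
  calc ‖(1 - p) x‖ = ‖x - p x‖ := rfl
    _ ≤ ‖x‖ + ‖p x‖ := norm_sub_le _ _
    _ ≤ (1 + ‖p‖) * ‖x‖ := by linarith [p.le_opNorm x]

section Evolution

variable (A : ℕ → X →L[ℝ] X)

lemma evol_self (n : ℕ) : evol A n n = 1 := by
  cases n <;> simp [evol]

lemma evol_succ {m n : ℕ} (hmn : n ≤ m) : evol A (m + 1) n = A m ∘L evol A m n :=
  if_neg (by omega)

variable {A} {P : ℕ → X →L[ℝ] X}

lemma InvariantFor.evol_comp (hInv : InvariantFor A P) {m n : ℕ} (hmn : n ≤ m) :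
    evol A m n ∘L P n = P m ∘L evol A m n := by
  induction m, hmn using Nat.le_induction with
  | base => rw [evol_self, one_def, id_comp, comp_id]
  | succ m hnm ih => rw [evol_succ A hnm, comp_assoc, ih, ← comp_assoc, hInv m, comp_assoc]

lemma InvariantFor.evol_one_sub_apply (hInv : InvariantFor A P) {m n : ℕ} (hmn : n ≤ m)
    (x : X) : evol A m n ((1 - P n) x) = (1 - P m) (evol A m n x) := by
  have := congr($(hInv.evol_comp hmn) x)
  simp only [comp_apply] at this
  simp [this]

end Evolution

section Skew

variable {A P : ℕ → X →L[ℝ] X} {B : ℕ → ℕ → X →L[ℝ] X}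

lemma ProjSeq.one_sub_apply_apply (hP : ProjSeq P) (n : ℕ) (x : X) :
    (1 - P n) ((1 - P n) x) = (1 - P n) x :=
  congr($((IsIdempotentElem.one_sub (hP n)).eq) x)

lemma SkewEvol.evol_apply (hB : SkewEvol A P B) {m n : ℕ} (hmn : n ≤ m) (x : X) :
    evol A m n (B m n ((1 - P m) x)) = (1 - P m) x :=
  congr($((hB m n hmn).1) x)

lemma SkewEvol.apply_evol_apply (hB : SkewEvol A P B) {m n : ℕ} (hmn : n ≤ m) (x : X) :
    B m n (evol A m n ((1 - P n) x)) = (1 - P n) x :=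
  congr($((hB m n hmn).2.1) x)

lemma SkewEvol.one_sub_apply (hB : SkewEvol A P B) {m n : ℕ} (hmn : n ≤ m) (x : X) :
    (1 - P n) (B m n ((1 - P m) x)) = B m n ((1 - P m) x) :=
  congr($((hB m n hmn).2.2) x).symm

variable {h k : ℕ → ℝ}

lemma Dichotomic.skewDichotomic (hB : SkewEvol A P B) (hh : ∀ n, 0 ≤ h n) (hk : ∀ n, 0 ≤ k n)
    (hd : Dichotomic A P h k) : SkewDichotomic A P B h k := by
  obtain ⟨d, hd1, hd_mono, hd⟩ := hd
  set M := partialSups fun n => 1 + ‖P n‖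
  have hM : ∀ n, 1 + ‖P n‖ ≤ M n := le_partialSups _
  have hM1 : ∀ n, 1 ≤ M n := fun n => by linarith [hM n, norm_nonneg (P n)]
  have hd0 : ∀ n, 0 ≤ d n := fun n => zero_le_one.trans (hd1 n)
  refine ⟨d * M, fun n => one_le_mul_of_one_le_of_one_le (hd1 n) (hM1 n),
    hd_mono.mul M.monotone hd0 fun n => zero_le_one.trans (hM1 n), fun m n hmn x => ⟨?_, ?_⟩⟩
  · have hPx : ‖P n x‖ ≤ M n * ‖x‖ := (norm_apply_le_one_add_norm_mul _ x).trans
      (mul_le_mul_of_nonneg_right (hM n) (norm_nonneg x))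
    calc h m * ‖evol A m n (P n x)‖ ≤ d n * (h n * ‖P n x‖) := (hd m n hmn x).1
      _ ≤ d n * (h n * (M n * ‖x‖)) := by gcongr <;> simp only [hd0, hh]
      _ = (d * M) n * (h n * ‖x‖) := by simp only [Pi.mul_apply]; ring
  · have hQx : ‖(1 - P m) x‖ ≤ M m * ‖x‖ := (norm_one_sub_apply_le_one_add_norm_mul _ x).trans
      (mul_le_mul_of_nonneg_right (hM m) (norm_nonneg x))
    have hy := (hd m n hmn (B m n ((1 - P m) x))).2
    rw [hB.one_sub_apply hmn, hB.evol_apply hmn] at hy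
    calc k m * ‖B m n ((1 - P m) x)‖ ≤ d m * (k n * ‖(1 - P m) x‖) := hy
      _ ≤ d m * (k n * (M m * ‖x‖)) := by gcongr <;> simp only [hd0, hk]
      _ = (d * M) m * (k n * ‖x‖) := by simp only [Pi.mul_apply]; ring

lemma SkewDichotomic.dichotomic (hP : ProjSeq P) (hInv : InvariantFor A P)
    (hB : SkewEvol A P B) (hs : SkewDichotomic A P B h k) : Dichotomic A P h k := by
  obtain ⟨s, hs1, hs_mono, hs⟩ := hs
  refine ⟨s, hs1, hs_mono, fun m n hmn x => ⟨?_, ?_⟩⟩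
  · simpa only [← comp_apply, hP n] using (hs m n hmn (P n x)).1
  · have hz := (hs m n hmn (evol A m n ((1 - P n) x))).2
    rwa [hInv.evol_one_sub_apply hmn, hP.one_sub_apply_apply, ← hInv.evol_one_sub_apply hmn,
      hB.apply_evol_apply hmn] at hz

end Skew

theorem stmt_2_general (A P : ℕ → X →L[ℝ] X) (B : ℕ → ℕ → X →L[ℝ] X)
    (hP : ProjSeq P) (hSI : StronglyInvariantFor A P) (hB : SkewEvol A P B)
    (h k : ℕ → ℝ) (hh : IsGrowthRate h) (hk : IsGrowthRate k) :
    Dichotomic A P h k ↔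
      ∃ s : ℕ → ℝ, (∀ n, 1 ≤ s n) ∧ Monotone s ∧
        ∀ m n : ℕ, n ≤ m → ∀ x : X,
          h m * ‖evol A m n (P n x)‖ ≤ s n * (h n * ‖x‖) ∧
          k m * ‖B m n ((1 - P m) x)‖ ≤ s m * (k n * ‖x‖) :=
  ⟨Dichotomic.skewDichotomic hB hh.nonneg hk.nonneg, SkewDichotomic.dichotomic hP hSI.1 hB⟩

theorem stmt_2 [CompleteSpace X] (A P : ℕ → X →L[ℝ] X) (B : ℕ → ℕ → X →L[ℝ] X)
    (hP : ProjSeq P) (hSI : StronglyInvariantFor A P) (hB : SkewEvol A P B)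
    (h k : ℕ → ℝ) (hh : IsGrowthRate h) (hk : IsGrowthRate k) :
    Dichotomic A P h k ↔
      ∃ s : ℕ → ℝ, (∀ n, 1 ≤ s n) ∧ Monotone s ∧
        ∀ m n : ℕ, n ≤ m → ∀ x : X,
          h m * ‖evol A m n (P n x)‖ ≤ s n * (h n * ‖x‖) ∧
          k m * ‖B m n ((1 - P m) x)‖ ≤ s m * (k n * ‖x‖) :=
  stmt_2_general A P B hP hSI hB h k hh hk

end
end

section
/- Let X = ℝ² with norm ‖(x_1,x_2)‖ = max{|x_1|,|x_2|}, let a, h, k be growth rates, define projectors P_n(x_1,x_2) = (x_1 + a_n x_2, 0) and Q_n(x_1,x_2) = (−a_n x_2, x_2), and consider the system generated by A_n = ((1+ln a_n)/(1+ln a_{n+1}))·(((h_{n+1})/h_n) P_n + (k_n/k_{n+1}) Q_{n+1}), whose evolution operator is A_m^n = ((1+ln a_n)/(1+ln a_m))·((h_m/h_n) P_n + (k_n/k_m) Q_m). Then: (i) the pair (A,P) has (h,k)-growth with g_n = 1 + ln a_n; (ii) if moreover h_n²/(1 + ln a_n) → ∞ as n → ∞, then the pair (A,P) is not (h,k)-dichotomic.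 -/
open ContinuousLinearMap Filter

noncomputable section

variable {X : Type*} [NormedAddCommGroup X] [NormedSpace ℝ X]

/-- The projection `P_n(x₁, x₂) = (x₁ + a_n x₂, 0)` on `ℝ²` with the max norm. -/
def Pj (a : ℕ → ℝ) (n : ℕ) : (ℝ × ℝ) →L[ℝ] (ℝ × ℝ) :=
  (ContinuousLinearMap.fst ℝ ℝ ℝ + a n • ContinuousLinearMap.snd ℝ ℝ ℝ).prod 0

/-- The system of Example `ex-are-crestere-nu-este-dicho`. -/
def Aop' (a h k : ℕ → ℝ) (n : ℕ) : (ℝ × ℝ) →L[ℝ] (ℝ × ℝ) :=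
  ((1 + Real.log (a n)) / (1 + Real.log (a (n + 1)))) •
    ((h (n + 1) / h n) • Pj a n + (k n / k (n + 1)) • (1 - Pj a (n + 1)))

/-! With `c_n = 1 + ln a_n`, the operators `E_m^n = (c_n/c_m)((h_m/h_n) P_n + (k_n/k_m) Q_m)`
satisfy `E_n^n = I` and `E_p^m E_m^n = E_p^n`, because `P_m P_n = P_n`, `Q_m Q_n = Q_m` and
`Q_m P_n = P_n Q_n = 0`; so they are the evolution operators. On `Im P_n` the evolution is
multiplication by `(c_n/c_m)(h_m/h_n)`, and it sends `Q_n x` to `(c_n/c_m)(k_n/k_m) Q_m x`, where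
`‖Q_n x‖ = a_n |x₂|` grows with `n`: this gives `(h,k)`-growth with `g = c`. A dichotomy `d`
would force `h_m² / c_m ≤ d_0 h_0² / c_0` for all `m`. -/

theorem evol_eq_of_comp_eq {A : ℕ → X →L[ℝ] X} {E : ℕ → ℕ → X →L[ℝ] X}
    (hE_self : ∀ n, E n n = 1) (hE_step : ∀ m n, n ≤ m → A m ∘L E m n = E (m + 1) n) :
    ∀ m n, n ≤ m → evol A m n = E m n := by
  intro m
  induction m with
  | zero =>
    intro n hn
    rw [Nat.le_zero.mp hn, hE_self]
    rfl
  | succ m ih =>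
    intro n hn
    rcases hn.eq_or_lt with rfl | hlt
    · rw [hE_self]
      exact if_pos le_rfl
    · rw [← hE_step m n (by omega), ← ih n (by omega)]
      exact if_neg (by omega)

section Example

variable (c a h k : ℕ → ℝ)

def exampleEvol (m n : ℕ) : (ℝ × ℝ) →L[ℝ] (ℝ × ℝ) :=
  (c n / c m) • ((h m / h n) • Pj a n + (k n / k m) • (1 - Pj a m))

theorem Pj_apply (n : ℕ) (x : ℝ × ℝ) : Pj a n x = (x.1 + a n * x.2, 0) := by
  simp [Pj]

theorem one_sub_Pj_apply (n : ℕ) (x : ℝ × ℝ) : (1 - Pj a n) x = (-(a n * x.2), x.2) := by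
  ext <;> simp [Pj_apply]

theorem Pj_comp_Pj (m n : ℕ) : Pj a m ∘L Pj a n = Pj a n := by
  ext <;> simp [Pj_apply]

theorem one_sub_Pj_comp_one_sub_Pj (m n : ℕ) :
    (1 - Pj a m) ∘L (1 - Pj a n) = 1 - Pj a m := by
  ext <;> simp [Pj_apply]

theorem one_sub_Pj_comp_Pj (m n : ℕ) : (1 - Pj a m) ∘L Pj a n = 0 := by
  ext <;> simp [Pj_apply]

theorem Pj_comp_one_sub_Pj (n : ℕ) : Pj a n ∘L (1 - Pj a n) = 0 := by
  ext <;> simp [Pj_apply]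

theorem exampleEvol_comp_Pj (m n j : ℕ) :
    exampleEvol c a h k m n ∘L Pj a j = (c n / c m * (h m / h n)) • Pj a j := by
  simp only [exampleEvol, smul_comp, add_comp, Pj_comp_Pj, one_sub_Pj_comp_Pj, smul_zero,
    add_zero, smul_smul]

theorem exampleEvol_comp_one_sub_Pj (m n : ℕ) :
    exampleEvol c a h k m n ∘L (1 - Pj a n) = (c n / c m * (k n / k m)) • (1 - Pj a m) := by
  simp only [exampleEvol, smul_comp, add_comp, Pj_comp_one_sub_Pj, one_sub_Pj_comp_one_sub_Pj,
    smul_zero, zero_add, smul_smul]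

variable {c h k}

theorem exampleEvol_self {n : ℕ} (hc : c n ≠ 0) (hh : h n ≠ 0) (hk : k n ≠ 0) :
    exampleEvol c a h k n n = 1 := by
  simp [exampleEvol, hc, hh, hk]

theorem exampleEvol_comp {m : ℕ} (hc : c m ≠ 0) (hh : h m ≠ 0) (hk : k m ≠ 0) (p n : ℕ) :
    exampleEvol c a h k p m ∘L exampleEvol c a h k m n = exampleEvol c a h k p n := by
  show exampleEvol c a h k p m ∘L (_ • (_ • Pj a n + _ • (1 - Pj a m))) = _
  simp only [comp_smul, comp_add, exampleEvol_comp_Pj, exampleEvol_comp_one_sub_Pj, smul_smul]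
  simp only [exampleEvol, smul_add, smul_smul]
  congr 2 <;> field_simp

theorem norm_one_sub_Pj_apply_le {m n : ℕ} (ha : 0 ≤ a n) (hnm : a n ≤ a m) (x : ℝ × ℝ) :
    ‖(1 - Pj a n) x‖ ≤ ‖(1 - Pj a m) x‖ := by
  rw [one_sub_Pj_apply, one_sub_Pj_apply, Prod.norm_def, Prod.norm_def]
  gcongr
  simp only [norm_neg, norm_mul, Real.norm_eq_abs, abs_of_nonneg ha,
    abs_of_nonneg (ha.trans hnm)]
  gcongr

theorem exampleEvol_Pj_bound {m n : ℕ} (hcn : 0 ≤ c n) (hcm : 1 ≤ c m) (hhn : 0 < h n)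
    (hhm : 0 ≤ h m) (x : ℝ × ℝ) :
    h n * ‖exampleEvol c a h k m n (Pj a n x)‖ ≤ c n * (h m * ‖Pj a n x‖) := by
  rw [← comp_apply, exampleEvol_comp_Pj, smul_apply, norm_smul,
    Real.norm_of_nonneg (by positivity)]
  calc h n * (c n / c m * (h m / h n) * ‖Pj a n x‖) = c n / c m * (h m * ‖Pj a n x‖) := by
        field_simp
    _ ≤ c n * (h m * ‖Pj a n x‖) := by gcongr; exact div_le_self hcn hcm

theorem exampleEvol_one_sub_Pj_bound {m n : ℕ} (hcn : 1 ≤ c n) (hcm : 0 < c m) (hkn : 0 ≤ k n)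
    (hkm : 0 < k m) (ha : 0 ≤ a n) (hnm : a n ≤ a m) (x : ℝ × ℝ) :
    k n * ‖(1 - Pj a n) x‖ ≤ c m * (k m * ‖exampleEvol c a h k m n ((1 - Pj a n) x)‖) := by
  rw [← comp_apply, exampleEvol_comp_one_sub_Pj, smul_apply, norm_smul,
    Real.norm_of_nonneg (by positivity)]
  calc k n * ‖(1 - Pj a n) x‖ ≤ k n * ‖(1 - Pj a m) x‖ := by
        gcongr; exact norm_one_sub_Pj_apply_le a ha hnm x
    _ ≤ c n * (k n * ‖(1 - Pj a m) x‖) := le_mul_of_one_le_left (by positivity) hcn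
    _ = c m * (k m * (c n / c m * (k n / k m) * ‖(1 - Pj a m) x‖)) := by field_simp

theorem not_dichotomic_of_tendsto {A : ℕ → (ℝ × ℝ) →L[ℝ] (ℝ × ℝ)} (hc : ∀ n, 0 < c n)
    (hh : ∀ n, 0 < h n) (hA : ∀ m n, n ≤ m → evol A m n = exampleEvol c a h k m n)
    (htend : Tendsto (fun n => h n ^ 2 / c n) atTop atTop) : ¬ Dichotomic A (Pj a) h k := by
  rintro ⟨d, -, -, hd⟩
  obtain ⟨m, hm⟩ := (htend.eventually_gt_atTop (d 0 * h 0 ^ 2 / c 0)).exists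
  have hP : Pj a 0 (1, 0) = (1, 0) := by simp [Pj_apply]
  have key := (hd m 0 (Nat.zero_le m) (1, 0)).1
  rw [hA m 0 (Nat.zero_le m), ← comp_apply, exampleEvol_comp_Pj, smul_apply, norm_smul, hP,
    Real.norm_of_nonneg (mul_pos (div_pos (hc 0) (hc m)) (div_pos (hh m) (hh 0))).le]
    at key
  simp only [Prod.norm_mk, norm_one, norm_zero, zero_le_one, sup_of_le_left, mul_one] at key
  have h0 : 0 < c 0 / h 0 := div_pos (hc 0) (hh 0)
  rw [show h m * (c 0 / c m * (h m / h 0)) = h m ^ 2 / c m * (c 0 / h 0) by ring,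
    ← le_div_iff₀ h0, show d 0 * h 0 / (c 0 / h 0) = d 0 * h 0 ^ 2 / c 0 by field_simp] at key
  exact hm.not_ge key

end Example

theorem stmt_10 (a h k : ℕ → ℝ)
    (ha : IsGrowthRate a) (hh : IsGrowthRate h) (hk : IsGrowthRate k) :
    (∀ m n : ℕ, n ≤ m → evol (Aop' a h k) m n =
      ((1 + Real.log (a n)) / (1 + Real.log (a m))) •
        ((h m / h n) • Pj a n + (k n / k m) • (1 - Pj a m))) ∧
    (∀ m n : ℕ, n ≤ m → ∀ x : ℝ × ℝ,
      h n * ‖evol (Aop' a h k) m n (Pj a n x)‖ ≤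
        (1 + Real.log (a n)) * (h m * ‖Pj a n x‖) ∧
      k n * ‖(1 - Pj a n) x‖ ≤
        (1 + Real.log (a m)) * (k m * ‖evol (Aop' a h k) m n ((1 - Pj a n) x)‖)) ∧
    HasGrowth (Aop' a h k) (Pj a) h k ∧
    (Tendsto (fun n => h n ^ 2 / (1 + Real.log (a n))) atTop atTop →
      ¬ Dichotomic (Aop' a h k) (Pj a) h k) := by
  obtain ⟨ha_mono, ha_one, -⟩ := ha
  obtain ⟨-, hh_one, -⟩ := hh
  obtain ⟨-, hk_one, -⟩ := hk
  set c : ℕ → ℝ := fun n => 1 + Real.log (a n)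
  have ha_pos n : 0 < a n := one_pos.trans_le (ha_one n)
  have hh_pos n : 0 < h n := one_pos.trans_le (hh_one n)
  have hk_pos n : 0 < k n := one_pos.trans_le (hk_one n)
  have hc_one n : 1 ≤ c n := le_add_of_nonneg_right (Real.log_nonneg (ha_one n))
  have hc_pos n : 0 < c n := one_pos.trans_le (hc_one n)
  have hc_mono : Monotone c := fun i j hij =>
    add_le_add_right (Real.log_le_log (ha_pos i) (ha_mono.monotone hij)) 1
  have hevol : ∀ m n, n ≤ m → evol (Aop' a h k) m n = exampleEvol c a h k m n :=
    evol_eq_of_comp_eq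
      (fun n => exampleEvol_self a (hc_pos n).ne' (hh_pos n).ne' (hk_pos n).ne')
      (fun m _ _ => exampleEvol_comp a (hc_pos m).ne' (hh_pos m).ne' (hk_pos m).ne' _ _)
  have hbounds : ∀ m n, n ≤ m → ∀ x : ℝ × ℝ,
      h n * ‖evol (Aop' a h k) m n (Pj a n x)‖ ≤ c n * (h m * ‖Pj a n x‖) ∧
      k n * ‖(1 - Pj a n) x‖ ≤ c m * (k m * ‖evol (Aop' a h k) m n ((1 - Pj a n) x)‖) := by
    intro m n hnm x
    rw [hevol m n hnm]
    exact ⟨exampleEvol_Pj_bound a (hc_pos n).le (hc_one m) (hh_pos n) (hh_pos m).le x,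
      exampleEvol_one_sub_Pj_bound a (hc_one n) (hc_pos m) (hk_pos n).le (hk_pos m)
        (ha_pos n).le (ha_mono.monotone hnm) x⟩
  exact ⟨hevol, hbounds, ⟨c, hc_one, hc_mono, hbounds⟩,
    not_dichotomic_of_tendsto a hc_pos hh_pos hevol⟩
end
end
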